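/- Let R be a binary relation on a finite set U and M(R) the successor relation matroid. Then cl_{M(R)}(X) = H_R(X) for all X ⊆ U if and only if R is an equivalence relation. -/
import Mathlib


def RS {α : Type*} (R : α → α → Prop) (x : α) : Set α := {y | R x y}

/-- The closure operator of the successor relation matroid. -/
def clS {α : Type*} (R : α → α → Prop) (X : Set α) : Set α :=
  {u | ∃ x ∈ X, RS R x = RS R u}

/-- The upper approximation operator. -/
def upper {α : Type*} (R : α → α → Prop) (X : Set α) : Set α :=
  {x | (RS R x ∩ X).Nonempty}

theorem stmt_11 {α : Type*} [Fintype α] [Nonempty α] (R : α → α → Prop) :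
    (∀ X : Set α, clS R X = upper R X) ↔ Equivalence R := by
  constructor
  · intro h
    have key : ∀ a u : α, RS R a = RS R u ↔ R u a := by
      intro a u
      have := Set.ext_iff.mp (h {a}) u
      simpa [clS, upper, RS, Set.inter_nonempty] using this
    refine ⟨fun a => (key a a).mp rfl, fun {a b} hab => ?_, fun {a b c} hab hbc => ?_⟩
    · exact (key a b).mp ((key b a).mpr hab).symm
    · exact (key c a).mp (((key c b).mpr hbc).trans ((key b a).mpr hab))
  · intro hE X
    ext u
    simp only [clS, upper, RS, Set.mem_setOf_eq, Set.inter_nonempty]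
    constructor
    · rintro ⟨x, hx, hRS⟩
      refine ⟨x, ?_, hx⟩
      have : x ∈ {y | R x y} := hE.refl x
      rwa [hRS] at this
    · rintro ⟨y, hRuy, hy⟩
      refine ⟨y, hy, ?_⟩
      ext z
      exact ⟨fun hz => hE.trans hRuy hz, fun hz => hE.trans (hE.symm hRuy) hz⟩
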